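/- arXiv:1603.06216 — 2 statements merged into one kernel-verified Lean document; each statement's English description precedes it below -/
import Mathlib

section
/- Let p and q be probability measures on a measurable space with p absolutely continuous with respect to q, and let A be a measurable set with p(A) = 1 and q(A) > 0. Then the Kullback--Leibler divergence of p from the normalized restriction of q to A satisfies D_KL(p ‖ (q(A))⁻¹ • q|_A) = D_KL(p ‖ q) + log q(A), provided D_KL(p ‖ q) is finite. -/
open MeasureTheory

/-- Kullback--Leibler divergence `D_KL(p ‖ q) = ∫ log (dp/dq) dp`. -/
noncomputable def klDiv {Ω : Type*} [MeasurableSpace Ω] (p q : Measure Ω) : ℝ :=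
  ∫ x, Real.log ((p.rnDeriv q) x).toReal ∂p

/-!
Since `p` lives on `A`, its density with respect to `(q A)⁻¹ • q|_A` is, `p`-a.e., `q A` times its
density with respect to `q`. So the log-likelihood ratio is shifted by the constant `log q(A)`,
which integrates to itself against the probability measure `p`.
-/

open Measure

namespace MeasureTheory

variable {Ω : Type*} [MeasurableSpace Ω] {p q : Measure Ω} {A : Set Ω}

lemma Measure.AbsolutelyContinuous.restrict_right_of_ae_mem (hpq : p ≪ q)
    (hpA : ∀ᵐ x ∂p, x ∈ A) : p ≪ q.restrict A := by
  rw [← restrict_eq_self_of_ae_mem hpA]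
  exact hpq.restrict A

lemma rnDeriv_restrict_right_ae_eq_of_ae_mem [SigmaFinite p] [SigmaFinite q] (hpq : p ≪ q)
    (hA : MeasurableSet A) (hpA : ∀ᵐ x ∂p, x ∈ A) :
    p.rnDeriv (q.restrict A) =ᵐ[p] p.rnDeriv q := by
  refine (hpq.restrict_right_of_ae_mem hpA).ae_le (eq_rnDeriv (s := 0) (measurable_rnDeriv p q)
    MutuallySingular.zero_left ?_).symm
  rw [zero_add, ← restrict_withDensity hA, withDensity_rnDeriv_eq p q hpq,
    restrict_eq_self_of_ae_mem hpA]

lemma llr_restrict_right_ae_eq_of_ae_mem [SigmaFinite p] [SigmaFinite q] (hpq : p ≪ q)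
    (hA : MeasurableSet A) (hpA : ∀ᵐ x ∂p, x ∈ A) :
    llr p (q.restrict A) =ᵐ[p] llr p q := by
  filter_upwards [rnDeriv_restrict_right_ae_eq_of_ae_mem hpq hA hpA] with x hx
  rw [llr, llr, hx]

lemma klDiv_eq_integral_llr : klDiv p q = ∫ x, llr p q x ∂p := rfl

lemma klDiv_restrict_right_of_ae_mem [SigmaFinite p] [SigmaFinite q] (hpq : p ≪ q)
    (hA : MeasurableSet A) (hpA : ∀ᵐ x ∂p, x ∈ A) :
    klDiv p (q.restrict A) = klDiv p q :=
  integral_congr_ae (llr_restrict_right_ae_eq_of_ae_mem hpq hA hpA)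

lemma klDiv_smul_right [IsProbabilityMeasure p] [SigmaFinite q] (hpq : p ≪ q)
    (hint : Integrable (llr p q) p) {c : ENNReal} (hc : c ≠ 0) (hc_ne_top : c ≠ ⊤) :
    klDiv p (c • q) = klDiv p q - Real.log c.toReal := by
  rw [klDiv_eq_integral_llr, integral_congr_ae (llr_smul_right hpq c hc hc_ne_top),
    integral_sub hint (integrable_const _), integral_const, probReal_univ, one_smul,
    klDiv_eq_integral_llr]

end MeasureTheory

theorem stmt0 {Ω : Type*} [MeasurableSpace Ω] (p q : Measure Ω)
    [IsProbabilityMeasure p] [IsProbabilityMeasure q]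
    (hpq : p ≪ q) (A : Set Ω) (hA : MeasurableSet A)
    (hpA : p A = 1) (hqA : 0 < q A)
    (hfin : Integrable (fun x => Real.log ((p.rnDeriv q) x).toReal) p) :
    klDiv p ((q A)⁻¹ • q.restrict A) = klDiv p q + Real.log (q A).toReal := by
  have hA_ae : ∀ᵐ x ∂p, x ∈ A := (mem_ae_iff_prob_eq_one hA).2 hpA
  have hint : Integrable (llr p (q.restrict A)) p :=
    hfin.congr (llr_restrict_right_ae_eq_of_ae_mem hpq hA hA_ae).symm
  rw [klDiv_smul_right (hpq.restrict_right_of_ae_mem hA_ae) hint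
    (ENNReal.inv_ne_zero.2 (measure_ne_top q A)) (ENNReal.inv_ne_top.2 hqA.ne'),
    klDiv_restrict_right_of_ae_mem hpq hA hA_ae,
    ENNReal.toReal_inv, Real.log_inv, sub_neg_eq_add]
end

section
/- With φ the standard normal PDF and Φ the standard normal CDF, and ε(ξ) = φ(ξ)/Φ(ξ), one has lim_{ξ → −∞} (ξ·ε(ξ) + ε(ξ)²) = 1. -/
open MeasureTheory Filter

/-- Standard normal probability density function φ. -/
noncomputable def stdNormalPDF (t : ℝ) : ℝ :=
  (Real.sqrt (2 * Real.pi))⁻¹ * Real.exp (-t ^ 2 / 2)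

/-- Standard normal cumulative distribution function Φ. -/
noncomputable def stdNormalCDF (t : ℝ) : ℝ :=
  ∫ s in Set.Iic t, stdNormalPDF s

open Set Topology

/-! With `t = 1/ξ < 0` and the Mills ratio `r = Φ(ξ)/φ(ξ)`, the functions
`φ(s) (s⁻³ - s⁻¹)` and `φ(s) (s⁻³ - s⁻¹ - 3 s⁻⁵)` vanish at `-∞` and have derivatives
`φ(s) (1 - 3 s⁻⁴) ≤ φ(s)` and `φ(s) (1 + 15 s⁻⁶) ≥ φ(s)`, so integrating over `(-∞, ξ]`
gives `t³ - t ≤ r ≤ t³ - t - 3 t⁵`. Since `ξ ε + ε² = (r + t) / (t r²)` for `ε = 1/r`,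
these bounds squeeze it between `(1 - 3t²) / (1 - t² + 3t⁴)²` and `(1 - t²)⁻²`, which both
tend to `1` as `t → 0⁻`. -/
lemma stdNormalPDF_pos (t : ℝ) : 0 < stdNormalPDF t := by
  unfold stdNormalPDF
  positivity

lemma integrable_stdNormalPDF : Integrable stdNormalPDF := by
  refine ((integrable_exp_neg_mul_sq (b := 1 / 2) (by norm_num)).const_mul
    (Real.sqrt (2 * Real.pi))⁻¹).congr (ae_of_all _ fun t => ?_)
  simp only [stdNormalPDF]
  ring_nf

lemma hasDerivAt_stdNormalPDF (s : ℝ) : HasDerivAt stdNormalPDF (-s * stdNormalPDF s) s := by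
  have h : HasDerivAt (fun t : ℝ => -t ^ 2 / 2) (-s) s :=
    ((hasDerivAt_pow 2 s).neg.div_const 2).congr_deriv (by push_cast; ring)
  exact (h.exp.const_mul _).congr_deriv (by rw [stdNormalPDF]; ring)

lemma tendsto_stdNormalPDF_atBot : Tendsto stdNormalPDF atBot (𝓝 0) := by
  have h : Tendsto (fun t : ℝ => -t ^ 2 / 2) atBot atBot :=
    ((tendsto_neg_atTop_atBot.comp ((tendsto_pow_atTop two_ne_zero).comp
      tendsto_abs_atBot_atTop)).atBot_div_const two_pos).congr fun t => by simp
  have := (Real.tendsto_exp_atBot.comp h).const_mul (Real.sqrt (2 * Real.pi))⁻¹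
  rwa [mul_zero] at this

lemma integrableOn_Iic_stdNormalPDF_mul_comp_inv {q : ℝ → ℝ} (hq : Continuous q) {ξ : ℝ}
    (hξ : ξ < 0) : IntegrableOn (fun s => stdNormalPDF s * q s⁻¹) (Iic ξ) := by
  obtain ⟨C, hC⟩ :=
    isCompact_Icc.exists_bound_of_continuousOn (hq.continuousOn (s := Icc ξ⁻¹ 0))
  refine integrable_stdNormalPDF.integrableOn.mul_bdd (c := C)
    (hq.measurable.comp measurable_inv).aestronglyMeasurable ?_
  filter_upwards [ae_restrict_mem measurableSet_Iic] with s hs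
  have hs0 : s < 0 := lt_of_le_of_lt hs hξ
  exact hC _ ⟨(inv_le_inv_of_neg hξ hs0).2 hs, (inv_neg''.2 hs0).le⟩

lemma tendsto_stdNormalPDF_mul_comp_inv_atBot {P : ℝ → ℝ} (hP : Continuous P) :
    Tendsto (fun s => stdNormalPDF s * P s⁻¹) atBot (𝓝 0) := by
  simpa using tendsto_stdNormalPDF_atBot.mul ((hP.tendsto 0).comp tendsto_inv_atBot_zero)

lemma hasDerivAt_stdNormalPDF_mul_comp_inv {P : ℝ → ℝ} {p s : ℝ} (hs : s ≠ 0)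
    (hP : HasDerivAt P p s⁻¹) :
    HasDerivAt (fun t => stdNormalPDF t * P t⁻¹)
      (-stdNormalPDF s * (s * P s⁻¹ + s⁻¹ ^ 2 * p)) s := by
  refine ((hasDerivAt_stdNormalPDF s).mul (hP.comp s (hasDerivAt_inv hs))).congr_deriv ?_
  rw [Function.comp_apply]
  field_simp
  ring

section Comparison

variable {G g : ℝ → ℝ} {ξ : ℝ}

lemma le_stdNormalCDF_of_hasDerivAt (hderiv : ∀ s ∈ Iic ξ, HasDerivAt G (g s) s)
    (hg : IntegrableOn g (Iic ξ)) (hG : Tendsto G atBot (𝓝 0))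
    (hle : ∀ s ∈ Iic ξ, g s ≤ stdNormalPDF s) : G ξ ≤ stdNormalCDF ξ := by
  rw [← sub_zero (G ξ), ← integral_Iic_of_hasDerivAt_of_tendsto' hderiv hg hG]
  exact setIntegral_mono_on hg integrable_stdNormalPDF.integrableOn measurableSet_Iic hle

lemma stdNormalCDF_le_of_hasDerivAt (hderiv : ∀ s ∈ Iic ξ, HasDerivAt G (g s) s)
    (hg : IntegrableOn g (Iic ξ)) (hG : Tendsto G atBot (𝓝 0))
    (hle : ∀ s ∈ Iic ξ, stdNormalPDF s ≤ g s) : stdNormalCDF ξ ≤ G ξ := by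
  rw [← sub_zero (G ξ), ← integral_Iic_of_hasDerivAt_of_tendsto' hderiv hg hG]
  exact setIntegral_mono_on integrable_stdNormalPDF.integrableOn hg measurableSet_Iic hle

end Comparison

lemma stdNormalPDF_mul_le_stdNormalCDF {ξ : ℝ} (hξ : ξ < 0) :
    stdNormalPDF ξ * (ξ⁻¹ ^ 3 - ξ⁻¹) ≤ stdNormalCDF ξ := by
  refine le_stdNormalCDF_of_hasDerivAt (fun s hs => ?_)
    (integrableOn_Iic_stdNormalPDF_mul_comp_inv (q := fun u => 1 - 3 * u ^ 4) (by fun_prop) hξ)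
    (tendsto_stdNormalPDF_mul_comp_inv_atBot (P := fun u => u ^ 3 - u) (by fun_prop))
    fun s _ => mul_le_of_le_one_right (stdNormalPDF_pos s).le
      (by nlinarith [sq_nonneg (s⁻¹ ^ 2)])
  have hs0 : s ≠ 0 := (lt_of_le_of_lt hs hξ).ne
  refine (hasDerivAt_stdNormalPDF_mul_comp_inv (P := fun u => u ^ 3 - u) hs0
    ((hasDerivAt_pow 3 s⁻¹).sub (hasDerivAt_id s⁻¹))).congr_deriv ?_
  simp only [Nat.cast_ofNat, inv_pow]
  field_simp
  ring

lemma stdNormalCDF_le_stdNormalPDF_mul {ξ : ℝ} (hξ : ξ < 0) :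
    stdNormalCDF ξ ≤ stdNormalPDF ξ * (ξ⁻¹ ^ 3 - ξ⁻¹ - 3 * ξ⁻¹ ^ 5) := by
  refine stdNormalCDF_le_of_hasDerivAt (fun s hs => ?_)
    (integrableOn_Iic_stdNormalPDF_mul_comp_inv (q := fun u => 1 + 15 * u ^ 6) (by fun_prop) hξ)
    (tendsto_stdNormalPDF_mul_comp_inv_atBot (P := fun u => u ^ 3 - u - 3 * u ^ 5) (by fun_prop))
    fun s _ => le_mul_of_one_le_right (stdNormalPDF_pos s).le
      (by nlinarith [sq_nonneg (s⁻¹ ^ 3)])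
  have hs0 : s ≠ 0 := (lt_of_le_of_lt hs hξ).ne
  refine (hasDerivAt_stdNormalPDF_mul_comp_inv (P := fun u => u ^ 3 - u - 3 * u ^ 5) hs0
    (((hasDerivAt_pow 3 s⁻¹).sub (hasDerivAt_id s⁻¹)).sub
      ((hasDerivAt_pow 5 s⁻¹).const_mul 3))).congr_deriv ?_
  simp only [Nat.cast_ofNat, inv_pow]
  field_simp
  ring

lemma inv_mul_inv_add_inv_sq_mem_Icc {t r : ℝ} (ht : t < 0) (ht2 : 3 * t ^ 2 ≤ 1)
    (hr : r ∈ Icc (t ^ 3 - t) (t ^ 3 - t - 3 * t ^ 5)) :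
    t⁻¹ * r⁻¹ + r⁻¹ ^ 2 ∈
      Icc ((1 - 3 * t ^ 2) / (1 - t ^ 2 + 3 * t ^ 4) ^ 2) ((1 - t ^ 2) ^ 2)⁻¹ := by
  obtain ⟨hA, hB⟩ := hr
  have hA0 : 0 < t ^ 3 - t := by nlinarith
  have hr0 : 0 < r := hA0.trans_le hA
  have htr : t * r ^ 2 < 0 := mul_neg_of_neg_of_pos ht (by positivity)
  have heq : t⁻¹ * r⁻¹ + r⁻¹ ^ 2 = (r + t) / (t * r ^ 2) := by
    field_simp [ht.ne, hr0.ne']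
  rw [heq, mem_Icc, le_div_iff_of_neg htr, div_le_iff_of_neg htr, div_mul_eq_mul_div,
    inv_mul_eq_div, le_div_iff₀ (pow_pos (by nlinarith) 2),
    div_le_iff₀ (pow_pos (by nlinarith) 2)]
  -- each side reads `(r - r₀) * c ≥ 0` with `c ≥ 0`, where `r₀` is the end of the range of `r`
  -- at which it is an equality
  have hnt : 0 ≤ -t := by linarith
  constructor
  · have hc : 0 ≤ (1 - t ^ 2 + 3 * t ^ 4) ^ 2
        - t * (1 - 3 * t ^ 2) * (r + (t ^ 3 - t - 3 * t ^ 5)) := by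
      nlinarith [sq_nonneg (1 - t ^ 2 + 3 * t ^ 4),
        mul_nonneg (mul_nonneg hnt (sub_nonneg.2 ht2)) (add_nonneg hr0.le (hr0.le.trans hB))]
    nlinarith [mul_nonneg (sub_nonneg.2 hB) hc]
  · have hc : 0 ≤ (1 - t ^ 2) ^ 2 - t * (r + (t ^ 3 - t)) := by
      nlinarith [sq_nonneg (1 - t ^ 2), mul_nonneg hnt (add_nonneg hr0.le hA0.le)]
    nlinarith [mul_nonneg (sub_nonneg.2 hA) hc]

theorem stmt9 :
    Tendsto (fun ξ : ℝ => ξ * (stdNormalPDF ξ / stdNormalCDF ξ) + (stdNormalPDF ξ / stdNormalCDF ξ) ^ 2) atBot (nhds 1) := by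
  have hlower : Tendsto
      (fun ξ : ℝ => (1 - 3 * ξ⁻¹ ^ 2) / (1 - ξ⁻¹ ^ 2 + 3 * ξ⁻¹ ^ 4) ^ 2) atBot (𝓝 1) := by
    have hF : ContinuousAt (fun t : ℝ => (1 - 3 * t ^ 2) / (1 - t ^ 2 + 3 * t ^ 4) ^ 2) 0 := by
      fun_prop (disch := norm_num)
    simpa [Function.comp_def] using hF.tendsto.comp tendsto_inv_atBot_zero
  have hupper : Tendsto (fun ξ : ℝ => ((1 - ξ⁻¹ ^ 2) ^ 2)⁻¹) atBot (𝓝 1) := by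
    have hF : ContinuousAt (fun t : ℝ => ((1 - t ^ 2) ^ 2)⁻¹) 0 := by
      fun_prop (disch := norm_num)
    simpa [Function.comp_def] using hF.tendsto.comp tendsto_inv_atBot_zero
  have hsqueeze : ∀ᶠ ξ : ℝ in atBot,
      ξ * (stdNormalPDF ξ / stdNormalCDF ξ) + (stdNormalPDF ξ / stdNormalCDF ξ) ^ 2 ∈
        Icc ((1 - 3 * ξ⁻¹ ^ 2) / (1 - ξ⁻¹ ^ 2 + 3 * ξ⁻¹ ^ 4) ^ 2)
          ((1 - ξ⁻¹ ^ 2) ^ 2)⁻¹ := by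
    filter_upwards [eventually_le_atBot (-2)] with ξ hξ
    have hξ0 : ξ < 0 := by linarith
    have hφ := stdNormalPDF_pos ξ
    have ht2 : 3 * ξ⁻¹ ^ 2 ≤ 1 := by
      rw [inv_pow, ← div_eq_mul_inv, div_le_one (by nlinarith)]
      nlinarith
    simpa only [inv_inv, inv_div] using inv_mul_inv_add_inv_sq_mem_Icc (inv_lt_zero.2 hξ0) ht2
      ⟨(le_div_iff₀ hφ).2 (by linarith [stdNormalPDF_mul_le_stdNormalCDF hξ0]),
        (div_le_iff₀ hφ).2 (by linarith [stdNormalCDF_le_stdNormalPDF_mul hξ0])⟩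
  exact tendsto_of_tendsto_of_tendsto_of_le_of_le' hlower hupper
    (hsqueeze.mono fun _ h => h.1) (hsqueeze.mono fun _ h => h.2)
end
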